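/- arXiv:1609.01136 — 7 statements merged into one kernel-verified Lean document; each statement's English description precedes it below -/
import Mathlib

section
/- (BCH bound) Let C be a cyclic code of length n over F_q with gcd(n,q)=1, and let α be a primitive n-th root of unity in the splitting field of x^n - 1. Suppose the generator polynomial g(x) of C has among its zeros α^u, α^{u+b}, α^{u+2b}, ..., α^{u+(δ-2)b}, where gcd(b,n)=1 and u ≥ 0. Then the minimum distance of C is at least δ. -/
/-!
Write the codeword as `c(x) = ∑ cᵢ xⁱ` with support `S`. Since `g ∣ c`, each `α^(u+tb)`,
`t ≤ δ - 2`, is a root of `c`, which says `∑_{i ∈ S} (cᵢ α^(ui)) (α^(bi))^t = 0`. As `α^b` is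
again a primitive `n`-th root of unity, the nodes `α^(bi)`, `i ∈ S`, are distinct; so if
`|S| ≤ δ - 1`, the first `|S|` of these equations form an invertible Vandermonde system and
force `c = 0`.
-/

open Polynomial Finset

theorem Finset.eq_zero_of_forall_sum_mul_pow_eq_zero {R ι : Type*} [CommRing R] [IsDomain R]
    {s : Finset ι} {a x : ι → R} (hx : Set.InjOn x s)
    (h : ∀ t < #s, ∑ i ∈ s, a i * x i ^ t = 0) : ∀ i ∈ s, a i = 0 := by
  set e := s.equivFin
  have hv : (fun j => a (e.symm j)) = 0 := by
    refine Matrix.eq_zero_of_forall_pow_sum_mul_pow_eq_zero (f := fun j => x (e.symm j)) ?_ ?_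
    · exact fun j k hjk => e.symm.injective (Subtype.ext (hx (e.symm j).2 (e.symm k).2 hjk))
    · intro t
      rw [← h t t.isLt, ← Finset.sum_coe_sort s]
      exact Equiv.sum_comp e.symm fun i : s => a i * x i ^ (t : ℕ)
  intro i hi
  simpa using congrFun hv (e ⟨i, hi⟩)

theorem Polynomial.aeval_sum_C_mul_X_pow {R A ι : Type*} [CommSemiring R] [CommSemiring A]
    [Algebra R A] (s : Finset ι) (c : ι → R) (k : ι → ℕ) (β : A) :
    aeval β (∑ i ∈ s, C (c i) * X ^ k i) = ∑ i ∈ s, algebraMap R A (c i) * β ^ k i := by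
  simp only [map_sum, map_mul, aeval_C, map_pow, aeval_X]

theorem stmt5_general (n : ℕ) (hn : 0 < n)
    (F E : Type*) [Field F] [DecidableEq F]
    [Field E] [Algebra F E]
    (α : E) (hα1 : α ^ n = 1) (hα2 : ∀ m : ℕ, 0 < m → m < n → α ^ m ≠ 1)
    (g : F[X])
    (δ b u : ℕ) (hb : Nat.Coprime b n)
    (hz : ∀ t : ℕ, t ≤ δ - 2 → Polynomial.aeval (α ^ (u + t * b)) g = 0) :
    ∀ c : Fin n → F, c ≠ 0 →
      g ∣ ∑ i : Fin n, C (c i) * X ^ (i : ℕ) →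
      δ ≤ (Finset.univ.filter fun i => c i ≠ 0).card := by
  intro c hc hdvd
  set S := Finset.univ.filter fun i => c i ≠ 0
  have hprim : IsPrimitiveRoot α n := .mk_of_lt α hn hα1 hα2
  have hnodes : Set.InjOn (fun i : Fin n => (α ^ b) ^ (i : ℕ)) S := fun i _ j _ hij =>
    Fin.ext ((hprim.pow_of_coprime b hb).pow_inj i.isLt j.isLt hij)
  have hroots (t : ℕ) (ht : t ≤ δ - 2) :
      ∑ i ∈ S, algebraMap F E (c i) * α ^ (u * i) * ((α ^ b) ^ (i : ℕ)) ^ t = 0 := by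
    have hsupp : ∀ i ∈ univ, algebraMap F E (c i) * (α ^ (u + t * b)) ^ (i : ℕ) ≠ 0 → c i ≠ 0 :=
      fun i _ hi hci => by simp [hci] at hi
    have := aeval_eq_zero_of_dvd_aeval_eq_zero hdvd (hz t ht)
    rw [aeval_sum_C_mul_X_pow, ← Finset.sum_filter_of_ne hsupp] at this
    rw [← this]
    refine Finset.sum_congr rfl fun i _ => ?_
    ring
  by_contra! hsmall
  have hcoeff := Finset.eq_zero_of_forall_sum_mul_pow_eq_zero hnodes
    fun t ht => hroots t (by omega)
  obtain ⟨i, hi⟩ := Function.ne_iff.mp hc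
  have := hcoeff i (by simpa [S] using hi)
  exact hi (by simpa [hprim.ne_zero hn.ne'] using this)

/-- BCH bound: if the generator polynomial `g ∣ x^n - 1` of a cyclic code of length `n`
over `F_q` (with `gcd(n,q)=1`) has among its zeros `α^u, α^{u+b}, …, α^{u+(δ-2)b}`
for a primitive `n`-th root of unity `α` in the splitting field and `gcd(b,n)=1`,
then every nonzero codeword has Hamming weight at least `δ`. -/
theorem stmt5 (q n : ℕ) (hq : IsPrimePow q) (hn : 0 < n)
    (F E : Type*) [Field F] [Fintype F] [DecidableEq F] (hF : Fintype.card F = q)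
    [Field E] [Algebra F E] (hcop : Nat.Coprime n q)
    (α : E) (hα1 : α ^ n = 1) (hα2 : ∀ m : ℕ, 0 < m → m < n → α ^ m ≠ 1)
    (g : F[X]) (hg : g ∣ X ^ n - 1)
    (δ b u : ℕ) (hδ : 2 ≤ δ) (hb : Nat.Coprime b n)
    (hz : ∀ t : ℕ, t ≤ δ - 2 → Polynomial.aeval (α ^ (u + t * b)) g = 0) :
    ∀ c : Fin n → F, c ≠ 0 →
      g ∣ ∑ i : Fin n, C (c i) * X ^ (i : ℕ) →
      δ ≤ (Finset.univ.filter fun i => c i ≠ 0).card :=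
  stmt5_general n hn F E α hα1 hα2 g δ b u hb hz
end

section
/- Let n, r, δ be positive integers with (r+δ-1) | n, let ν' = n/(r+δ-1), let μ be a positive integer with μ ≤ ν', and let b be a positive integer with gcd(b, n) = 1. Fix a residue j modulo (r+δ-1) and let L = {i mod n : i ≡ j (mod r+δ-1)} and D = {(j + s·b) mod n : s = 0, 1, ..., n - μ(r+δ-1) + δ - 2}. Then |L ∩ D| = ν' - μ + 1. -/
open Finset

/-!
Since `b` is a unit modulo `r + δ - 1`, the term `j + s b` of the progression lies in `L` exactly
when `(r + δ - 1) ∣ s`, and since `b` is a unit modulo `n` and the progression has at most `n`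
terms, distinct `s` give distinct residues. So `|L ∩ D|` is the number of multiples of
`r + δ - 1` below `(ν' - μ)(r + δ - 1) + δ - 1`, which is `ν' - μ + 1`.
-/

theorem Nat.card_filter_dvd_range_add_one (M m : ℕ) : #{s ∈ range (M + 1) | m ∣ s} = M / m + 1 := by
  rw [← Nat.count_eq_card_filter_range, Nat.count_succ', Nat.count_eq_card_filter_range,
    Nat.card_multiples]
  simp

theorem ZMod.castHom_natCast_add_mul_eq_iff {n m b : ℕ} (hdvd : m ∣ n) (hb : b.Coprime m)
    (j s : ℕ) :
    ZMod.castHom hdvd (ZMod m) ((j + s * b : ℕ) : ZMod n) = (j : ZMod m) ↔ m ∣ s := by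
  have hb_unit : IsUnit (b : ZMod m) := (ZMod.isUnit_iff_coprime b m).mpr hb
  rw [map_natCast]
  push_cast
  rw [add_eq_left, hb_unit.mul_left_eq_zero, ZMod.natCast_eq_zero_iff]

theorem ZMod.injOn_natCast_add_mul {n b : ℕ} (hb : b.Coprime n) (j : ℕ) :
    Set.InjOn (fun s : ℕ => ((j + s * b : ℕ) : ZMod n)) (range n) := by
  have hb_unit : IsUnit (b : ZMod n) := (ZMod.isUnit_iff_coprime b n).mpr hb
  intro s₁ hs₁ s₂ hs₂ h
  have h_cast : (s₁ : ZMod n) = s₂ := by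
    push_cast at h
    exact hb_unit.mul_right_cancel (add_left_cancel h)
  simpa [ZMod.val_natCast_of_lt (mem_range.mp hs₁), ZMod.val_natCast_of_lt (mem_range.mp hs₂)]
    using congrArg ZMod.val h_cast

theorem ZMod.card_filter_castHom_eq_inter_image_range {n m b N : ℕ} [NeZero n] (hdvd : m ∣ n)
    (hb : b.Coprime n) (hN : N ≤ n) (j : ℕ) :
    #((univ.filter fun x : ZMod n => ZMod.castHom hdvd (ZMod m) x = (j : ZMod m)) ∩
      (range N).image (fun s => ((j + s * b : ℕ) : ZMod n))) = #{s ∈ range N | m ∣ s} := by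
  rw [filter_inter, univ_inter, filter_image, card_image_of_injOn <|
    (ZMod.injOn_natCast_add_mul hb j).mono <|
      coe_subset.mpr ((filter_subset _ _).trans (range_subset_range.mpr hN))]
  simp_rw [ZMod.castHom_natCast_add_mul_eq_iff hdvd (hb.coprime_dvd_right hdvd)]

theorem stmt6_general (n r δ μ b : ℕ) [NeZero n] (hδ : 2 ≤ δ)
    (hdvd : (r + δ - 1) ∣ n) (hμ : 1 ≤ μ) (hμ' : μ ≤ n / (r + δ - 1))
    (hb : Nat.Coprime b n) (j : ℕ) :
    ((Finset.univ.filter fun x : ZMod n =>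
        ZMod.castHom hdvd (ZMod (r + δ - 1)) x = (j : ZMod (r + δ - 1))) ∩
      (Finset.range (n - μ * (r + δ - 1) + δ - 1)).image
        (fun s => ((j + s * b : ℕ) : ZMod n))).card
      = n / (r + δ - 1) - μ + 1 := by
  have hm : 0 < r + δ - 1 := by omega
  have hn : n = n / (r + δ - 1) * (r + δ - 1) := (Nat.div_mul_cancel hdvd).symm
  have hμm : μ * (r + δ - 1) ≤ n / (r + δ - 1) * (r + δ - 1) := Nat.mul_le_mul_right _ hμ'
  have hm_le : r + δ - 1 ≤ μ * (r + δ - 1) := Nat.le_mul_of_pos_left _ hμ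
  have hlen : n - μ * (r + δ - 1) + δ - 1
      = (δ - 2) + (n / (r + δ - 1) - μ) * (r + δ - 1) + 1 := by
    rw [Nat.sub_mul]
    omega
  rw [ZMod.card_filter_castHom_eq_inter_image_range hdvd hb (by omega), hlen,
    Nat.card_filter_dvd_range_add_one, Nat.add_mul_div_right _ _ hm,
    Nat.div_eq_of_lt (by omega : δ - 2 < r + δ - 1), zero_add]

/-- Counting lemma: with `(r+δ-1) ∣ n`, `ν' = n/(r+δ-1)`, `μ ≤ ν'`, `gcd(b,n)=1`,
the coset `L = {i mod n : i ≡ j (mod r+δ-1)}` meets the arithmetic progression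
`D = {j + s·b : s = 0,…,n-μ(r+δ-1)+δ-2}` in exactly `ν' - μ + 1` elements. -/
theorem stmt6 (n r δ μ b : ℕ) [NeZero n] (hr : 0 < r) (hδ : 2 ≤ δ)
    (hdvd : (r + δ - 1) ∣ n) (hμ : 1 ≤ μ) (hμ' : μ ≤ n / (r + δ - 1))
    (hb : Nat.Coprime b n) (j : ℕ) :
    ((Finset.univ.filter fun x : ZMod n =>
        ZMod.castHom hdvd (ZMod (r + δ - 1)) x = (j : ZMod (r + δ - 1))) ∩
      (Finset.range (n - μ * (r + δ - 1) + δ - 1)).image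
        (fun s => ((j + s * b : ℕ) : ZMod n))).card
      = n / (r + δ - 1) - μ + 1 :=
  stmt6_general n r δ μ b hδ hdvd hμ hμ' hb j
end

section
/- Let q be a prime power, n | q-1, α ∈ F_q a primitive n-th root of unity, r, δ ≥ 2 positive integers with (r+δ-1) | n, and set ν' = n/(r+δ-1). Fix j with 0 ≤ j ≤ r+δ-2. For each m in {0,...,ν'-1}, the vector h_m = (1, α^{m(r+δ-1)+j}, α^{2(m(r+δ-1)+j)}, ..., α^{(n-1)(m(r+δ-1)+j)}) is defined. Then the n-dimensional vector v = (v_0,...,v_{n-1}) with v_t = α^{t·j} if ν' | t and v_t = 0 otherwise, lies in the F_q-span of {h_0, ..., h_{ν'-1}}. -/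
open Finset

/-!
If `α` is a primitive `n`-th root of unity and `e ∣ n`, then `α ^ e` is a primitive `ν`-th root
of unity, `ν = n / e`, so `∑_{m < ν} α ^ (t e m)` is `ν` when `ν ∣ t` and `0` otherwise. Since `ν`
divides `n`, it is invertible in the field, and the `t`-th coordinate of `ν⁻¹ ∑_m h_m` is
`α ^ (t j)` times this indicator: the vector `v` is the average of the `h_m`.
-/

theorem IsPrimitiveRoot.sum_pow_mul_eq_ite {R : Type*} [CommRing R] [IsDomain R] {ζ : R} {k : ℕ}
    (hζ : IsPrimitiveRoot ζ k) (t : ℕ) :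
    ∑ m ∈ range k, ζ ^ (t * m) = if k ∣ t then (k : R) else 0 := by
  simp_rw [pow_mul]
  split_ifs with hkt
  · simp [(hζ.pow_eq_one_iff_dvd t).mpr hkt]
  · have hne : ζ ^ t ≠ 1 := mt (hζ.pow_eq_one_iff_dvd t).mp hkt
    refine eq_zero_of_ne_zero_of_mul_left_eq_zero (sub_ne_zero_of_ne hne) ?_
    rw [mul_geom_sum, ← pow_mul, mul_comm, pow_mul, hζ.pow_eq_one, one_pow, sub_self]

theorem IsPrimitiveRoot.ite_dvd_eq_inv_mul_sum {F : Type*} [Field F] {α : F} {n e : ℕ}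
    [NeZero n] (hα : IsPrimitiveRoot α n) (he : e ∣ n) (j t : ℕ) :
    (if n / e ∣ t then α ^ (t * j) else 0)
      = ((n / e : ℕ) : F)⁻¹ * ∑ m ∈ range (n / e), α ^ (t * (m * e + j)) := by
  have he0 : e ≠ 0 := by rintro rfl; exact NeZero.ne n (zero_dvd_iff.mp he)
  have hαe : IsPrimitiveRoot (α ^ e) (n / e) := hα.pow_of_dvd he0 he
  have : NeZero (n / e) := ⟨(Nat.div_ne_zero_iff_of_dvd he).mpr ⟨NeZero.ne n, he0⟩⟩
  have hν : ((n / e : ℕ) : F) ≠ 0 := hαe.neZero'.out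
  have hsplit (m : ℕ) : α ^ (t * (m * e + j)) = α ^ (t * j) * (α ^ e) ^ (t * m) := by
    rw [← pow_mul, ← pow_add]; ring_nf
  simp_rw [hsplit, ← mul_sum, hαe.sum_pow_mul_eq_ite t]
  split_ifs
  · rw [mul_left_comm, inv_mul_cancel₀ hν, mul_one]
  · simp

theorem stmt8_general (n r δ : ℕ) (hn : 0 < n)
    (F : Type*) [Field F]
    (α : F) (hα1 : α ^ n = 1) (hα2 : ∀ m : ℕ, 0 < m → m < n → α ^ m ≠ 1)
    (hd : (r + δ - 1) ∣ n)
    (j : ℕ) :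
    (fun t : Fin n => if (n / (r + δ - 1)) ∣ (t : ℕ) then α ^ ((t : ℕ) * j) else 0)
      ∈ Submodule.span F
        (Set.range fun m : Fin (n / (r + δ - 1)) => fun t : Fin n =>
          α ^ ((t : ℕ) * ((m : ℕ) * (r + δ - 1) + j))) := by
  have : NeZero n := ⟨hn.ne'⟩
  have hα : IsPrimitiveRoot α n := .mk_of_lt α hn hα1 hα2
  refine (Submodule.mem_span_range_iff_exists_fun F).mpr
    ⟨fun _ => ((n / (r + δ - 1) : ℕ) : F)⁻¹, funext fun t => ?_⟩
  simp only [Finset.sum_apply, Pi.smul_apply, smul_eq_mul, ← mul_sum,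
    Fin.sum_univ_eq_sum_range (fun m => α ^ ((t : ℕ) * (m * (r + δ - 1) + j)))]
  exact (hα.ite_dvd_eq_inv_mul_sum hd j t).symm

/-- With `n ∣ q-1`, `α ∈ F_q` a primitive `n`-th root of unity, `(r+δ-1) ∣ n`,
`ν' = n/(r+δ-1)` and `0 ≤ j ≤ r+δ-2`, the vector `v` with `v_t = α^{t·j}` when
`ν' ∣ t` and `v_t = 0` otherwise lies in the span of the vectors
`h_m = (α^{t(m(r+δ-1)+j)})_{t<n}`, `m = 0,…,ν'-1`. -/
theorem stmt8 (q n r δ : ℕ) (hq : IsPrimePow q) (hn : 0 < n) (hdvd : n ∣ q - 1)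
    (F : Type*) [Field F] [Fintype F] (hF : Fintype.card F = q)
    (α : F) (hα1 : α ^ n = 1) (hα2 : ∀ m : ℕ, 0 < m → m < n → α ^ m ≠ 1)
    (hr : 0 < r) (hδ : 2 ≤ δ) (hd : (r + δ - 1) ∣ n)
    (j : ℕ) (hj : j ≤ r + δ - 2) :
    (fun t : Fin n => if (n / (r + δ - 1)) ∣ (t : ℕ) then α ^ ((t : ℕ) * j) else 0)
      ∈ Submodule.span F
        (Set.range fun m : Fin (n / (r + δ - 1)) => fun t : Fin n =>
          α ^ ((t : ℕ) * ((m : ℕ) * (r + δ - 1) + j))) :=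
  stmt8_general n r δ hn F α hα1 hα2 hd j
end

section
/- Let α be a primitive n-th root of unity in a field F, let ν' and r+δ-1 be positive integers with ν'(r+δ-1) = n, and let i_1 < i_2 < ... < i_{δ-1} be integers with 0 ≤ i_1 and i_{δ-1} ≤ r+δ-2 forming an arithmetic progression with common difference b satisfying gcd(b,n)=1. Then the (δ-1) × (r+δ-1) matrix V' with entries V'_{j,t} = (α^{ν' i_j})^t (1 ≤ j ≤ δ-1, 0 ≤ t ≤ r+δ-2) has the property that every (δ-1) × (δ-1) submatrix formed by any δ-1 of its columns is invertible; equivalently, V' is the parity-check matrix of an [r+δ-1, r, δ] MDS code. -/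
/-! Factoring `(α ^ (ν * i1)) ^ t` out of column `t` leaves the transposed Vandermonde matrix
in the points `β ^ t` with `β = α ^ (ν * b)`. Since `gcd(b, n) = 1`, `β` is a primitive
`(r + δ - 1)`-th root of unity, so distinct columns give distinct points. -/

open Finset

theorem Matrix.det_of_mul_pow_ne_zero {R : Type*} [CommRing R] [IsDomain R] {k : ℕ}
    {x c : Fin k → R} (hx : Function.Injective x) (hc : ∀ s, c s ≠ 0) :
    (Matrix.of fun j s : Fin k => c s * x s ^ (j : ℕ)).det ≠ 0 := by
  have h := Matrix.det_mul_row c (Matrix.vandermonde x).transpose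
  simp only [Matrix.transpose_apply, Matrix.vandermonde_apply, Matrix.det_transpose] at h
  rw [h]
  exact mul_ne_zero (prod_ne_zero_iff.mpr fun s _ => hc s)
    (Matrix.det_vandermonde_ne_zero_iff.mpr hx)

theorem IsPrimitiveRoot.injective_pow_comp {M : Type*} [CommMonoid M] {β : M} {m k : ℕ}
    (hβ : IsPrimitiveRoot β m) {t : Fin k → Fin m} (ht : Function.Injective t) :
    Function.Injective fun s => β ^ (t s : ℕ) :=
  fun _ _ h => ht (Fin.ext (hβ.pow_inj (t _).isLt (t _).isLt h))

theorem stmt9_general (n r δ ν b i1 : ℕ) (hn0 : 0 < n)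
    (hn : ν * (r + δ - 1) = n)
    (F : Type*) [Field F]
    (α : F) (hα1 : α ^ n = 1) (hα2 : ∀ m : ℕ, 0 < m → m < n → α ^ m ≠ 1)
    (hb : Nat.Coprime b n) :
    ∀ cols : Fin (δ - 1) → Fin (r + δ - 1), Function.Injective cols →
      (Matrix.of fun jj s : Fin (δ - 1) =>
        (α ^ (ν * (i1 + (jj : ℕ) * b))) ^ ((cols s : ℕ))).det ≠ 0 := by
  intro cols hcols
  have hα : IsPrimitiveRoot α n := .mk_of_lt α hn0 hα1 hα2
  have hβ : IsPrimitiveRoot ((α ^ ν) ^ b) (r + δ - 1) :=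
    (hα.pow hn0 hn.symm).pow_of_coprime b (hb.coprime_dvd_right (Dvd.intro_left ν hn))
  have hα0 : α ≠ 0 := hα.ne_zero hn0.ne'
  convert Matrix.det_of_mul_pow_ne_zero (hβ.injective_pow_comp hcols)
    (c := fun s => (α ^ (ν * i1)) ^ (cols s : ℕ)) (fun _ => pow_ne_zero _ (pow_ne_zero _ hα0))
    using 2
  ext jj s
  simp only [Matrix.of_apply, ← pow_mul, ← pow_add]
  ring_nf

/-- For `α` a primitive `n`-th root of unity, `ν'(r+δ-1) = n`, and exponents
`i_j = i1 + j·b` (an arithmetic progression with `gcd(b,n)=1` contained in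
`[0, r+δ-2]`), every `(δ-1)×(δ-1)` submatrix of the `(δ-1)×(r+δ-1)` matrix
`V'_{j,t} = (α^{ν' i_j})^t` obtained by choosing `δ-1` columns is invertible. -/
theorem stmt9 (n r δ ν b i1 : ℕ) (hδ : 2 ≤ δ) (hr : 0 < r) (hn0 : 0 < n)
    (hn : ν * (r + δ - 1) = n)
    (F : Type*) [Field F]
    (α : F) (hα1 : α ^ n = 1) (hα2 : ∀ m : ℕ, 0 < m → m < n → α ^ m ≠ 1)
    (hb : Nat.Coprime b n) (hprog : i1 + (δ - 2) * b ≤ r + δ - 2) :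
    ∀ cols : Fin (δ - 1) → Fin (r + δ - 1), Function.Injective cols →
      (Matrix.of fun jj s : Fin (δ - 1) =>
        (α ^ (ν * (i1 + (jj : ℕ) * b))) ^ ((cols s : ℕ))).det ≠ 0 :=
  stmt9_general n r δ ν b i1 hn0 hn F α hα1 hα2 hb
end

section
/- Let n, k, r be positive integers with n odd, (r+1) | n, r | k, and μ = k/r even with 2 ≤ μ ≤ n/(r+1). Let b be odd with gcd(b,n)=1. Define subsets of Z/nZ: D = {±((n-b)/2 - t·b) mod n : t = 0, 1, ..., (n-k-μ-1)/2} and L = {i ∈ Z/nZ : i ≡ 0 (mod r+1)}. Then |D| = n - k - μ + 1, |L ∩ D| = n/(r+1) - μ + 1, and |L ∪ D| = n - k. -/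
/-!
Since `2 · (n - b)/2 ≡ -b (mod n)`, negation sends `(n - b)/2 - t b` to `(n - b)/2 + (t + 1) b`,
so `D` is the arithmetic progression `a, a + b, …, a + (n - k - μ) b` with `a = (n - b)/2 - M b`,
`2M + 1 = n - k - μ`. As `b` is a unit mod `n` and `n - k - μ + 1 ≤ n`, its terms are distinct.
Modulo the odd number `r + 1`, which divides `n` and `n - k - μ = (n/(r+1) - μ)(r + 1)`, we get
`2a ≡ 0`, hence `a ≡ 0`, so the term `a + i b` lies in `L` iff `(r + 1) ∣ i`. Counting these `i`
gives `|L ∩ D|`, and inclusion–exclusion with `|L| = n/(r+1)` gives `|L ∪ D|`.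
-/

open Finset

theorem Nat.card_filter_dvd_range_succ (m d : ℕ) : #{i ∈ range (m + 1) | d ∣ i} = m / d + 1 := by
  induction m with
  | zero => simp [filter_singleton]
  | succ m ih =>
    rw [range_add_one, filter_insert]
    by_cases h : d ∣ m + 1
    · rw [if_pos h, card_insert_of_notMem (by simp), ih, Nat.succ_div_of_dvd h]
    · rw [if_neg h, ih, Nat.succ_div_of_not_dvd h]

theorem Finset.image_sub_union_image_neg_sub {R : Type*} [CommRing R] [DecidableEq R] {c b : R}
    (hc : 2 * c + b = 0) (M : ℕ) :
    (range (M + 1)).image (fun t : ℕ => c - t * b) ∪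
        (range (M + 1)).image (fun t : ℕ => -(c - t * b)) =
      (range (2 * M + 2)).image (fun i : ℕ => c - M * b + i * b) := by
  have hleft (t : ℕ) (ht : t ≤ M) : c - t * b = c - M * b + (M - t : ℕ) * b := by
    rw [Nat.cast_sub ht]; ring
  have hright (t : ℕ) : -(c - t * b) = c - M * b + (M + 1 + t : ℕ) * b := by
    push_cast; linear_combination -hc
  ext x
  simp only [mem_union, mem_image, mem_range]
  constructor
  · rintro (⟨t, ht, rfl⟩ | ⟨t, ht, rfl⟩)
    · exact ⟨M - t, by omega, (hleft t (by omega)).symm⟩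
    · exact ⟨M + 1 + t, by omega, (hright t).symm⟩
  · rintro ⟨i, hi, rfl⟩
    by_cases hiM : i ≤ M
    · refine .inl ⟨M - i, by omega, ?_⟩
      rw [hleft _ (by omega), Nat.sub_sub_self hiM]
    · refine .inr ⟨i - (M + 1), by omega, ?_⟩
      rw [hright, show M + 1 + (i - (M + 1)) = i by omega]

namespace ZMod

theorem card_filter_castHom_eq_zero {n d : ℕ} [NeZero n] (hdvd : d ∣ n) :
    #{x : ZMod n | castHom hdvd (ZMod d) x = 0} = n / d := by
  set φ := (castHom hdvd (ZMod d)).toAddMonoidHom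
  have hker := φ.ker.card_mul_index
  rw [AddSubgroup.index_ker, φ.range_eq_top_of_surjective (castHom_surjective hdvd),
    AddSubgroup.card_top, Nat.card_zmod, Nat.card_zmod] at hker
  rw [← Fintype.card_subtype, ← Nat.card_eq_fintype_card]
  exact (Nat.div_eq_of_eq_mul_left (Nat.pos_of_dvd_of_pos hdvd (NeZero.pos n)) hker.symm).symm

theorem injOn_add_mul_range {n m : ℕ} (hm : m ≤ n) (a : ZMod n) {b : ZMod n} (hb : IsUnit b) :
    Set.InjOn (fun i : ℕ => a + i * b) (range m) := by
  intro i hi j hj hij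
  simp only [coe_range, Set.mem_Iio] at hi hj
  rw [add_right_inj, hb.mul_left_inj, natCast_eq_natCast_iff'] at hij
  rwa [Nat.mod_eq_of_lt (by omega), Nat.mod_eq_of_lt (by omega)] at hij

theorem two_mul_intCast_sub_div_two_add {n b : ℕ} (hn : Odd n) (hb : Odd b) :
    2 * ((((n : ℤ) - b) / 2 : ℤ) : ZMod n) + b = 0 := by
  have h : 2 * (((n : ℤ) - b) / 2) + b = n := by
    have := Nat.odd_iff.mp hn; have := Nat.odd_iff.mp hb; omega
  simpa using congrArg (Int.cast : ℤ → ZMod n) h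

theorem castHom_add_mul_eq_zero_iff {n d : ℕ} (hdvd : d ∣ n) {a b : ZMod n}
    (ha : castHom hdvd (ZMod d) a = 0) (hb : IsUnit (castHom hdvd (ZMod d) b)) (i : ℕ) :
    castHom hdvd (ZMod d) (a + i * b) = 0 ↔ d ∣ i := by
  rw [map_add, ha, zero_add, map_mul, map_natCast, hb.mul_left_eq_zero, natCast_eq_zero_iff]

theorem card_filter_castHom_eq_zero_image_add_mul {n d m : ℕ} (hdvd : d ∣ n) (hm : m + 1 ≤ n)
    {a b : ZMod n} (ha : castHom hdvd (ZMod d) a = 0) (hb : IsUnit b) :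
    #{x ∈ (range (m + 1)).image (fun i : ℕ => a + i * b) | castHom hdvd (ZMod d) x = 0} =
      m / d + 1 := by
  rw [filter_image, card_image_of_injOn ((injOn_add_mul_range hm a hb).mono (filter_subset _ _)),
    filter_congr fun i _ => castHom_add_mul_eq_zero_iff hdvd ha (hb.map _) i,
    Nat.card_filter_dvd_range_succ]

theorem castHom_sub_mul_eq_zero {n d : ℕ} (hdvd : d ∣ n) (hd : Odd d) {c b : ZMod n}
    (hc : 2 * c + b = 0) {M : ℕ} (hM : d ∣ 2 * M + 1) :
    castHom hdvd (ZMod d) (c - M * b) = 0 := by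
  have h2 : IsUnit (2 : ZMod d) := by
    exact_mod_cast (isUnit_iff_coprime 2 d).mpr (Nat.coprime_two_left.mpr hd)
  have hdouble : 2 * (c - M * b) = -(((2 * M + 1 : ℕ) : ZMod n) * b) := by
    push_cast; linear_combination hc
  rw [← h2.mul_right_eq_zero, ← map_ofNat (castHom hdvd (ZMod d)) 2, ← map_mul, hdouble, map_neg,
    map_mul, map_natCast, (natCast_eq_zero_iff _ _).mpr hM, zero_mul, neg_zero]

end ZMod

theorem stmt12_general (n k r μ b : ℕ) [NeZero n] (hodd : Odd n)
    (hdvd : (r + 1) ∣ n) (hk : k = μ * r) (hμe : Even μ) (hμ1 : 2 ≤ μ)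
    (hμ2 : μ ≤ n / (r + 1))
    (hbo : Odd b) (hb : Nat.Coprime b n) :
    ∀ D L : Finset (ZMod n),
      D = ((Finset.range ((n - k - μ - 1) / 2 + 1)).image
            (fun t : ℕ => ((((n : ℤ) - (b : ℤ)) / 2 - (t : ℤ) * (b : ℤ) : ℤ) : ZMod n))) ∪
          ((Finset.range ((n - k - μ - 1) / 2 + 1)).image
            (fun t : ℕ => ((-(((n : ℤ) - (b : ℤ)) / 2 - (t : ℤ) * (b : ℤ)) : ℤ) : ZMod n))) →
      L = Finset.univ.filter
            (fun x : ZMod n => ZMod.castHom hdvd (ZMod (r + 1)) x = 0) →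
      D.card = n - k - μ + 1 ∧
      (L ∩ D).card = n / (r + 1) - μ + 1 ∧
      (L ∪ D).card = n - k := by
  intro D L hD hL
  have hkμ : k + μ = μ * (r + 1) := by rw [hk]; ring
  have hμn : μ * (r + 1) ≤ n := (Nat.le_div_iff_mul_le (Nat.succ_pos r)).mp hμ2
  obtain ⟨M, hM⟩ : Odd (n - k - μ) := by
    rw [Nat.sub_sub, hkμ]; exact Nat.Odd.sub_even hμn hodd (hμe.mul_right _)
  have hN : 2 * M + 1 = (n / (r + 1) - μ) * (r + 1) := by
    rw [← hM, Nat.sub_mul, Nat.div_mul_cancel hdvd, Nat.sub_sub, hkμ]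
  set c : ZMod n := ((((n : ℤ) - b) / 2 : ℤ) : ZMod n)
  have hc : 2 * c + b = 0 := ZMod.two_mul_intCast_sub_div_two_add hodd hbo
  have hbu : IsUnit (b : ZMod n) := (ZMod.isUnit_iff_coprime b n).mpr hb
  have hD' : D = (range (2 * M + 1 + 1)).image (fun i : ℕ => c - M * b + i * b) := by
    rw [hD, show (n - k - μ - 1) / 2 = M by omega, ← image_sub_union_image_neg_sub hc]
    push_cast; rfl
  have hDcard : D.card = 2 * M + 1 + 1 := by
    rw [hD', card_image_of_injOn (ZMod.injOn_add_mul_range (by omega) _ hbu), card_range]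
  have hLD : (L ∩ D).card = n / (r + 1) - μ + 1 := by
    have hstart := ZMod.castHom_sub_mul_eq_zero hdvd (hodd.of_dvd_nat hdvd) hc
      (hN ▸ dvd_mul_left _ _)
    rw [← Nat.mul_div_cancel (n / (r + 1) - μ) (Nat.succ_pos r), ← hN,
      ← ZMod.card_filter_castHom_eq_zero_image_add_mul hdvd (by omega) hstart hbu, ← hD', hL,
      filter_inter, univ_inter]
  have hLcard : L.card = n / (r + 1) := hL ▸ ZMod.card_filter_castHom_eq_zero hdvd
  have hunion := card_union_add_card_inter L D
  refine ⟨by omega, hLD, by omega⟩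

/-- For odd `n`, `(r+1) ∣ n`, `k = μr` with `μ` even, `2 ≤ μ ≤ n/(r+1)`,
`k + μ < n`, and odd `b` with `gcd(b,n)=1`: the set
`D = {±((n-b)/2 - t·b) : t = 0,…,(n-k-μ-1)/2}` and the coset
`L = {i : i ≡ 0 (mod r+1)}` satisfy `|D| = n-k-μ+1`,
`|L ∩ D| = n/(r+1) - μ + 1`, and `|L ∪ D| = n-k`. -/
theorem stmt12 (n k r μ b : ℕ) [NeZero n] (hodd : Odd n) (hr : 0 < r)
    (hdvd : (r + 1) ∣ n) (hk : k = μ * r) (hμe : Even μ) (hμ1 : 2 ≤ μ)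
    (hμ2 : μ ≤ n / (r + 1)) (hkn : k + μ < n)
    (hbo : Odd b) (hb : Nat.Coprime b n) :
    ∀ D L : Finset (ZMod n),
      D = ((Finset.range ((n - k - μ - 1) / 2 + 1)).image
            (fun t : ℕ => ((((n : ℤ) - (b : ℤ)) / 2 - (t : ℤ) * (b : ℤ) : ℤ) : ZMod n))) ∪
          ((Finset.range ((n - k - μ - 1) / 2 + 1)).image
            (fun t : ℕ => ((-(((n : ℤ) - (b : ℤ)) / 2 - (t : ℤ) * (b : ℤ)) : ℤ) : ZMod n))) →
      L = Finset.univ.filter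
            (fun x : ZMod n => ZMod.castHom hdvd (ZMod (r + 1)) x = 0) →
      D.card = n - k - μ + 1 ∧
      (L ∩ D).card = n / (r + 1) - μ + 1 ∧
      (L ∪ D).card = n - k :=
  stmt12_general n k r μ b hodd hdvd hk hμe hμ1 hμ2 hbo hb
end

section
/- (Nonexistence from Remark 7) Let n be odd, (r+1) | n with r ≥ 1, and 0 < l ≤ r. Suppose Z ⊆ Z/nZ is a union Z = L ∪ D where L = {i : i ≡ l (mod r+1)}, D is an arithmetic progression modulo n with common difference b satisfying gcd(b,n)=1, and Z is closed under negation (i.e., -Z = Z mod n). Then |D| ≥ n - r. -/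
/-!
Write `D = {a + t b : t < N}` and reduce modulo `m = r + 1`. Since `m` is odd and `0 < l < m`,
the classes `l` and `-l` differ, so closure of `L ∪ D` under negation puts every `x ≡ -l (mod m)`
into `D`. As `b` is a unit, among the last `m` indices `n - m ≤ t < n` some `a + t b` has class
`-l`; since `t ↦ a + t b` is injective on `[0, n)`, membership in `D` forces `t < N`, whence
`|D| ≥ min N n ≥ n - r`.
-/

open Finset

theorem ZMod.natCast_ne_neg_natCast_of_odd {m l : ℕ} (hm : Odd m) (hl0 : 0 < l) (hlm : l < m) :
    (l : ZMod m) ≠ -(l : ZMod m) := by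
  intro h
  have h2l : ((2 * l : ℕ) : ZMod m) = 0 := by
    push_cast
    linear_combination h
  rw [ZMod.natCast_eq_zero_iff] at h2l
  have := Nat.le_of_dvd hl0 (hm.coprime_two_right.dvd_of_dvd_mul_left h2l)
  omega

section ArithmeticProgression

variable {n : ℕ} {a b : ZMod n}

theorem ZMod.injOn_add_natCast_mul (hb : IsUnit b) :
    Set.InjOn (fun t : ℕ => a + t * b) (Set.Iio n) := by
  intro t ht t' ht' h
  have hcast : (t : ZMod n) = t' := hb.mul_right_cancel (add_left_cancel h)
  simpa [ZMod.val_natCast_of_lt ht, ZMod.val_natCast_of_lt ht'] using congrArg ZMod.val hcast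

theorem ZMod.min_le_card_image_range_add_natCast_mul (hb : IsUnit b) (N : ℕ) :
    min N n ≤ ((range N).image fun t : ℕ => a + t * b).card := by
  calc min N n = ((range (min N n)).image fun t : ℕ => a + t * b).card := by
        rw [card_image_of_injOn, card_range]
        exact (ZMod.injOn_add_natCast_mul hb).mono fun t ht =>
          Set.mem_Iio.2 ((mem_range.1 ht).trans_le (min_le_right N n))
    _ ≤ _ := card_le_card (image_subset_image (range_subset_range.2 (min_le_left N n)))

theorem ZMod.lt_of_add_natCast_mul_mem_image_range (hb : IsUnit b) {t N : ℕ} (ht : t < n)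
    (hmem : a + t * b ∈ (range N).image fun t : ℕ => a + t * b) : t < N := by
  obtain ⟨t', ht'N, heq⟩ := mem_image.1 hmem
  rcases lt_or_ge t' n with ht'n | hnt'
  · rw [← ZMod.injOn_add_natCast_mul hb ht'n ht heq]
    exact mem_range.1 ht'N
  · exact ht.trans_le (hnt'.trans_lt (mem_range.1 ht'N)).le

theorem ZMod.exists_castHom_add_natCast_mul_eq [NeZero n] {m : ℕ} [NeZero m] (hmn : m ∣ n) (hb : IsUnit b)
    (y : ZMod m) : ∃ t : ℕ, n - m ≤ t ∧ t < n ∧ ZMod.castHom hmn (ZMod m) (a + t * b) = y := by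
  set f := ZMod.castHom hmn (ZMod m)
  have hfb : IsUnit (f b) := hb.map f
  set c : ZMod m := (y - f a) * ↑hfb.unit⁻¹
  have hcm : c.val < m := ZMod.val_lt c
  have hmn' : m ≤ n := Nat.le_of_dvd (NeZero.pos n) hmn
  refine ⟨n - m + c.val, by omega, by omega, ?_⟩
  have hcast : ((n - m + c.val : ℕ) : ZMod m) = c := by
    rw [Nat.cast_add, (ZMod.natCast_eq_zero_iff _ _).2 (Nat.dvd_sub hmn dvd_rfl), zero_add,
      ZMod.natCast_zmod_val]
  rw [map_add, map_mul, map_natCast, hcast, mul_assoc, hfb.val_inv_mul, mul_one]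
  ring

end ArithmeticProgression

theorem stmt14_general (n r l b N : ℕ) [NeZero n] (hodd : Odd n)
    (hdvd : (r + 1) ∣ n) (hl1 : 0 < l) (hl2 : l ≤ r) (hb : Nat.Coprime b n)
    (a : ZMod n) (Z L D : Finset (ZMod n))
    (hL : L = Finset.univ.filter fun x : ZMod n =>
        ZMod.castHom hdvd (ZMod (r + 1)) x = (l : ZMod (r + 1)))
    (hD : D = (Finset.range N).image fun t : ℕ => a + (t : ZMod n) * (b : ZMod n))
    (hZ : Z = L ∪ D) (hneg : ∀ x ∈ Z, -x ∈ Z) :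
    n - r ≤ D.card := by
  have hl_ne : (l : ZMod (r + 1)) ≠ -l :=
    ZMod.natCast_ne_neg_natCast_of_odd (hodd.of_dvd_nat hdvd) hl1 (Nat.lt_succ_of_le hl2)
  have hmemD : ∀ x, ZMod.castHom hdvd (ZMod (r + 1)) x = -l → x ∈ D := by
    intro x hx
    have hnegx : -x ∈ L := by
      rw [hL, mem_filter, map_neg, hx, neg_neg]
      exact ⟨mem_univ _, rfl⟩
    have hx' : x ∈ Z := by
      simpa using hneg (-x) (hZ ▸ mem_union_left D hnegx)
    simp only [hZ, hL, mem_union, mem_filter, mem_univ, true_and, hx] at hx'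
    exact hx'.resolve_left hl_ne.symm
  have hbu : IsUnit (b : ZMod n) := (ZMod.isUnit_iff_coprime b n).2 hb
  obtain ⟨t, hnt, htn, ht⟩ := ZMod.exists_castHom_add_natCast_mul_eq (a := a) hdvd hbu (-l)
  have htN : t < N :=
    ZMod.lt_of_add_natCast_mul_mem_image_range hbu htn (hD ▸ hmemD _ ht)
  calc n - r ≤ min N n := by omega
    _ ≤ D.card := hD ▸ ZMod.min_le_card_image_range_add_natCast_mul hbu N

/-- Nonexistence (Remark 7): for odd `n`, `(r+1) ∣ n`, `0 < l ≤ r`, if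
`Z = L ∪ D` where `L = {i : i ≡ l (mod r+1)}` and `D` is an arithmetic
progression modulo `n` with common difference `b`, `gcd(b,n)=1`, and `Z` is
closed under negation, then `|D| ≥ n - r`. -/
theorem stmt14 (n r l b N : ℕ) [NeZero n] (hodd : Odd n) (hr : 1 ≤ r)
    (hdvd : (r + 1) ∣ n) (hl1 : 0 < l) (hl2 : l ≤ r) (hb : Nat.Coprime b n)
    (a : ZMod n) (Z L D : Finset (ZMod n))
    (hL : L = Finset.univ.filter fun x : ZMod n =>
        ZMod.castHom hdvd (ZMod (r + 1)) x = (l : ZMod (r + 1)))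
    (hD : D = (Finset.range N).image fun t : ℕ => a + (t : ZMod n) * (b : ZMod n))
    (hZ : Z = L ∪ D) (hneg : ∀ x ∈ Z, -x ∈ Z) :
    n - r ≤ D.card :=
  stmt14_general n r l b N hodd hdvd hl1 hl2 hb a Z L D hL hD hZ hneg
end

section
/- Let n, k, r, δ be positive integers with n odd, (r+δ-1) | n, r | k, δ even, μ = k/r even, and 2 ≤ μ ≤ ν' where ν' = n/(r+δ-1). Define subsets of Z/nZ: D = {±((n-1)/2 - t) mod n : t = 0, 1, ..., (n-k-(μ-1)(δ-1)-2)/2}, and L_m = {i ∈ Z/nZ : i ≡ m (mod r+δ-1)} for m ∈ {0, ±1, ±2, ..., ±(δ-2)/2} (with residues ±m taken modulo r+δ-1). Then |D| = n - k - (μ-1)(δ-1), |L_m ∩ D| = ν' - μ + 1 for each of the δ-1 values of m, and |(⋃_m L_m) ∪ D| = n - k. -/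
/-!
Write `e = r + δ - 1`, `n = ν e`, `δ = 2w + 2`, `μ = 2p` and `C = ν - μ`. Since
`-((n-1)/2 - t) ≡ (n+1)/2 + t (mod n)`, the set `D` is the injective image in `ℤ/nℤ` of the
integer interval `[p e - w, (p + C) e + w]`, of length `C e + δ - 1 = n - k - (μ-1)(δ-1) < n`.
That interval is `C` full periods modulo `e` followed by a block of `δ - 1` consecutive integers
centred at a multiple of `e`, so each residue `m` with `|m| ≤ w` occurs `C + 1` times in it.
The cosets `L_m` have `ν` elements each and are pairwise disjoint, and inclusion–exclusion
gives `|(⋃ L_m) ∪ D| = (δ-1) ν + (C e + δ - 1) - (δ-1)(C+1) = n - k`.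
-/

open Finset

namespace Int

lemma ceil_sub_div_eq {s b m q : ℤ} (hs : 0 < s) (h₁ : (q - 1) * s < b - m)
    (h₂ : b - m ≤ q * s) : ⌈((b : ℚ) - m) / s⌉ = q := by
  have hs' : (0 : ℚ) < s := by exact_mod_cast hs
  rw [ceil_eq_iff, lt_div_iff₀ hs', div_le_iff₀ hs']
  exact ⟨by exact_mod_cast h₁, by exact_mod_cast h₂⟩

lemma card_filter_modEq_Ico_add_mul {s : ℤ} (hs : 0 < s) (a m : ℤ) (c : ℕ) :
    #{j ∈ Ico a (a + c * s) | j ≡ m [ZMOD s]} = c := by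
  have key := Ico_filter_modEq_card a (a + c * s) hs m
  have hs' : (s : ℚ) ≠ 0 := by exact_mod_cast hs.ne'
  rw [show (((a + c * s : ℤ) : ℚ) - m) / s = (a - m) / s + (c : ℤ) by
    push_cast; field_simp; ring, ceil_add_intCast] at key
  omega

lemma card_filter_modEq_Ico_centered {s w m : ℤ} (hs : 2 * w < s) (hm : |m| ≤ w) (q : ℤ)
    (c : ℕ) : #{j ∈ Ico (q * s - w) ((q + c) * s + w + 1) | j ≡ m [ZMOD s]} = c + 1 := by
  rw [abs_le] at hm
  have hs₀ : 0 < s := by omega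
  have key := Ico_filter_modEq_card (q * s - w) ((q + c) * s + w + 1) hs₀ m
  rw [ceil_sub_div_eq (q := q + c + 1) hs₀ (by linarith) (by linarith),
    ceil_sub_div_eq (q := q) hs₀ (by linarith) (by linarith)] at key
  omega

end Int

lemma Finset.card_biUnion_union_add_mul {ι α : Type*} [DecidableEq α] {I : Finset ι}
    {L : ι → Finset α} (hL : (I : Set ι).PairwiseDisjoint L) (D : Finset α) {a b : ℕ}
    (ha : ∀ i ∈ I, #(L i) = a) (hb : ∀ i ∈ I, #(L i ∩ D) = b) :
    #(I.biUnion L ∪ D) + #I * b = #I * a + #D := by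
  have hLD : (I : Set ι).PairwiseDisjoint fun i => L i ∩ D :=
    hL.mono fun _ => inter_subset_left
  have h := card_union_add_card_inter (I.biUnion L) D
  rwa [biUnion_inter, card_biUnion hL, card_biUnion hLD, sum_const_nat ha, sum_const_nat hb] at h

lemma sub_mul_sub_pred_mul_pred_eq {n r μ δ ν : ℕ} (hδ : 1 ≤ δ) (hμ : 1 ≤ μ) (hμν : μ ≤ ν)
    (hn : n = ν * (r + δ - 1)) :
    n - μ * r - (μ - 1) * (δ - 1) = (ν - μ) * (r + δ - 1) + (δ - 1) := by
  obtain ⟨a, rfl⟩ := Nat.exists_eq_add_of_le hδ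
  obtain ⟨b, rfl⟩ := Nat.exists_eq_add_of_le hμ
  obtain ⟨C, rfl⟩ := Nat.exists_eq_add_of_le hμν
  subst hn
  rw [show r + (1 + a) - 1 = r + a by omega]
  simp only [Nat.add_sub_cancel_left]
  ring_nf
  omega

namespace ZMod

variable {n e : ℕ}

lemma intCast_injOn_Ico {a b : ℤ} (h : b ≤ a + n) :
    Set.InjOn (Int.cast : ℤ → ZMod n) (Ico a b) := by
  intro x hx y hy hxy
  simp only [coe_Ico, Set.mem_Ico] at hx hy
  rw [intCast_eq_intCast_iff_dvd_sub] at hxy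
  have := Int.eq_zero_of_abs_lt_dvd hxy (abs_lt.mpr ⟨by omega, by omega⟩)
  omega

lemma image_intCast_Ico_eq_univ [NeZero n] :
    (Ico (0 : ℤ) n).image (Int.cast : ℤ → ZMod n) = univ := by
  refine eq_univ_of_forall fun x => mem_image.mpr ⟨x.val, ?_, by simp⟩
  exact mem_Ico.mpr ⟨by positivity, by exact_mod_cast x.val_lt⟩

lemma image_range_union_image_range_neg {c : ℤ} (hn : (n : ℤ) = 2 * c + 1) (T : ℕ) :
    (range T).image (fun t : ℕ => ((c - t : ℤ) : ZMod n)) ∪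
        (range T).image (fun t : ℕ => ((-(c - t) : ℤ) : ZMod n)) =
      (Ico (c + 1 - T) (c + 1 + T)).image (Int.cast : ℤ → ZMod n) := by
  have hshift : ∀ t : ℤ, ((-(c - t) : ℤ) : ZMod n) = ((c + 1 + t : ℤ) : ZMod n) := by
    intro t
    rw [intCast_eq_intCast_iff_dvd_sub]
    exact ⟨1, by omega⟩
  ext x
  simp only [mem_union, mem_image, mem_range, mem_Ico, hshift]
  constructor
  · rintro (⟨t, ht, rfl⟩ | ⟨t, ht, rfl⟩)
    · exact ⟨c - t, by omega, rfl⟩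
    · exact ⟨c + 1 + t, by omega, rfl⟩
  · rintro ⟨j, hj, rfl⟩
    rcases le_or_gt j c with hjc | hjc
    · exact Or.inl ⟨(c - j).toNat, by omega, by congr 1; omega⟩
    · exact Or.inr ⟨(j - c - 1).toNat, by omega, by congr 1; omega⟩

variable (hdvd : e ∣ n)
include hdvd

lemma card_filter_castHom_image_Ico {a b : ℤ} (h : b ≤ a + n) (m : ℤ) :
    #{x ∈ (Ico a b).image Int.cast | castHom hdvd (ZMod e) x = m} =
      #{j ∈ Ico a b | j ≡ m [ZMOD e]} := by
  rw [filter_image,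
    card_image_of_injOn ((intCast_injOn_Ico h).mono (coe_subset.mpr (filter_subset _ _)))]
  congr 1
  refine filter_congr fun j _ => ?_
  rw [map_intCast, intCast_eq_intCast_iff]

lemma card_filter_castHom_eq [NeZero n] (m : ℤ) :
    #{x : ZMod n | castHom hdvd (ZMod e) x = m} = n / e := by
  have he : 0 < e := Nat.pos_of_dvd_of_pos hdvd (Nat.pos_of_neZero n)
  rw [← image_intCast_Ico_eq_univ, card_filter_castHom_image_Ico hdvd (by simp),
    ← Int.card_filter_modEq_Ico_add_mul (s := e) (by omega) 0 m (n / e)]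
  congr
  push_cast [Nat.div_mul_cancel hdvd]
  ring

lemma pairwiseDisjoint_filter_castHom [NeZero n] {w : ℤ} (hw : 2 * w < e) :
    (Icc (-w) w : Set ℤ).PairwiseDisjoint
      fun m => ({x : ZMod n | castHom hdvd (ZMod e) x = m} : Finset (ZMod n)) := by
  intro m hm m' hm' hne
  refine disjoint_filter.mpr fun x _ h h' => hne ?_
  refine intCast_injOn_Ico (n := e) (a := -w) (b := w + 1) (by omega) ?_ ?_ (h.symm.trans h')
  all_goals simp only [coe_Icc, Set.mem_Icc, coe_Ico, Set.mem_Ico] at hm hm' ⊢; omega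

end ZMod


lemma ZMod.image_range_union_image_range_neg_eq_image_Ico_mul {n e p C w : ℕ} (hodd : Odd n)
    (hn : n = (2 * p + C) * e) :
    (range ((C * e + (2 * w + 1) - 2) / 2 + 1)).image
          (fun t : ℕ => ((((n : ℤ) - 1) / 2 - t : ℤ) : ZMod n)) ∪
        (range ((C * e + (2 * w + 1) - 2) / 2 + 1)).image
          (fun t : ℕ => ((-(((n : ℤ) - 1) / 2 - t) : ℤ) : ZMod n)) =
      (Ico ((p : ℤ) * e - w) ((p + C) * e + w + 1)).image Int.cast := by
  obtain ⟨q, hq⟩ : Odd (C * e) := by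
    obtain ⟨hpC, he⟩ := Nat.odd_mul.mp (hn ▸ hodd)
    exact (Nat.odd_add'.mp hpC).mpr (even_two_mul p) |>.mul he
  have hn' : (n : ℤ) = 2 * (p * e) + 2 * q + 1 := by
    rw [hn, add_mul, mul_assoc, hq]; push_cast; ring
  rw [show (C * e + (2 * w + 1) - 2) / 2 + 1 = q + w + 1 by omega,
    ZMod.image_range_union_image_range_neg (c := ((n : ℤ) - 1) / 2) (by omega)]
  have hq' : (C : ℤ) * e = 2 * q + 1 := by exact_mod_cast hq
  congr 2
  · push_cast; omega
  · push_cast; rw [add_mul]; omega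

open ZMod in
theorem card_cosets_union_image_Ico_mul {n e : ℕ} [NeZero n] (hdvd : e ∣ n) {w p C : ℕ}
    (hn : n = (2 * p + C) * e) (hwe : 2 * w < e) (hp : 1 ≤ p) (L : ℤ → Finset (ZMod n))
    (hL : ∀ m : ℤ, L m = univ.filter fun x => castHom hdvd (ZMod e) x = m)
    (D : Finset (ZMod n))
    (hD : D = (Ico ((p : ℤ) * e - w) ((p + C) * e + w + 1)).image Int.cast) :
    #D = C * e + (2 * w + 1) ∧ (∀ m ∈ Icc (-(w : ℤ)) w, #(L m ∩ D) = C + 1) ∧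
      #((Icc (-(w : ℤ)) w).biUnion L ∪ D) = C * e + 2 * p * (2 * w + 1) := by
  obtain rfl : L = fun m : ℤ => ({x | castHom hdvd (ZMod e) x = m} : Finset (ZMod n)) :=
    funext hL
  have hlen : ((p : ℤ) + C) * e + w + 1 ≤ p * e - w + n := by
    have : (e : ℤ) ≤ p * e := le_mul_of_one_le_left (by positivity) (by exact_mod_cast hp)
    rw [hn]; push_cast; linarith
  have hDcard : #D = C * e + (2 * w + 1) := by
    rw [hD, card_image_of_injOn (intCast_injOn_Ico hlen), Int.card_Ico,
      show ((p : ℤ) + C) * e + w + 1 - (p * e - w) = (C * e + (2 * w + 1) : ℕ) by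
        push_cast; ring,
      Int.toNat_natCast]
  have hLD : ∀ m ∈ Icc (-(w : ℤ)) w,
      #((univ.filter fun x => castHom hdvd (ZMod e) x = m) ∩ D) = C + 1 := by
    intro m hm
    rw [filter_inter, univ_inter, hD, card_filter_castHom_image_Ico hdvd hlen,
      Int.card_filter_modEq_Ico_centered (by omega) (abs_le.mpr (mem_Icc.mp hm))]
  refine ⟨hDcard, hLD, ?_⟩
  have hwe' : 2 * (w : ℤ) < e := by exact_mod_cast hwe
  have key := card_biUnion_union_add_mul (pairwiseDisjoint_filter_castHom hdvd hwe') D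
    (fun m _ => card_filter_castHom_eq hdvd m) hLD
  have hν : n / e = 2 * p + C := by rw [hn, Nat.mul_div_cancel _ (by omega)]
  rw [Int.card_Icc, show (w + 1 - -w : ℤ).toNat = 2 * w + 1 by omega, hDcard, hν] at key
  ring_nf at key ⊢
  omega

/-- Counting for Construction 2: for odd `n`, even `δ ≥ 2`, `(r+δ-1) ∣ n`,
`k = μr` with `μ` even, `2 ≤ μ ≤ ν' = n/(r+δ-1)`: with
`D = {±((n-1)/2 - t) : t = 0,…,(n-k-(μ-1)(δ-1)-2)/2}` and cosets
`L_m = {i : i ≡ m (mod r+δ-1)}` for `m ∈ {0,±1,…,±(δ-2)/2}`, one has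
`|D| = n-k-(μ-1)(δ-1)`, `|L_m ∩ D| = ν'-μ+1` for each such `m`, and
`|(⋃_m L_m) ∪ D| = n-k`. -/
theorem stmt16 (n k r δ μ : ℕ) [NeZero n] (hodd : Odd n) (hr : 0 < r)
    (hδ : 2 ≤ δ) (hδe : Even δ) (hdvd : (r + δ - 1) ∣ n) (hk : k = μ * r)
    (hμe : Even μ) (hμ1 : 2 ≤ μ) (hμ2 : μ ≤ n / (r + δ - 1)) :
    ∀ D : Finset (ZMod n), ∀ L : ℤ → Finset (ZMod n),
      D = ((Finset.range ((n - k - (μ - 1) * (δ - 1) - 2) / 2 + 1)).image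
            (fun t : ℕ => ((((n : ℤ) - 1) / 2 - (t : ℤ) : ℤ) : ZMod n))) ∪
          ((Finset.range ((n - k - (μ - 1) * (δ - 1) - 2) / 2 + 1)).image
            (fun t : ℕ => ((-(((n : ℤ) - 1) / 2 - (t : ℤ)) : ℤ) : ZMod n))) →
      (∀ m : ℤ, L m = Finset.univ.filter fun x : ZMod n =>
          ZMod.castHom hdvd (ZMod (r + δ - 1)) x = (m : ZMod (r + δ - 1))) →
      D.card = n - k - (μ - 1) * (δ - 1) ∧
      (∀ m ∈ Finset.Icc (-(((δ : ℤ) - 2) / 2)) (((δ : ℤ) - 2) / 2),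
        (L m ∩ D).card = n / (r + δ - 1) - μ + 1) ∧
      ((Finset.Icc (-(((δ : ℤ) - 2) / 2)) (((δ : ℤ) - 2) / 2)).biUnion
          (fun m => L m) ∪ D).card = n - k := by
  intro D L hD hL
  obtain ⟨w, hw⟩ : ∃ w : ℕ, δ = 2 * w + 2 :=
    ⟨δ / 2 - 1, by obtain ⟨d, rfl⟩ := hδe; omega⟩
  obtain ⟨p, hp⟩ : ∃ p, μ = 2 * p := ⟨μ / 2, by obtain ⟨q, rfl⟩ := hμe; omega⟩
  obtain ⟨C, hC⟩ := Nat.exists_eq_add_of_le hμ2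
  have hn : n = (2 * p + C) * (r + δ - 1) := by rw [← hp, ← hC, Nat.div_mul_cancel hdvd]
  have hN : n - k - (μ - 1) * (δ - 1) = C * (r + δ - 1) + (2 * w + 1) := by
    rw [hk, sub_mul_sub_pred_mul_pred_eq (by omega) (by omega) hμ2
      (Nat.div_mul_cancel hdvd).symm, hC, Nat.add_sub_cancel_left]
    omega
  rw [hN, ZMod.image_range_union_image_range_neg_eq_image_Ico_mul hodd hn] at hD
  obtain ⟨hDcard, hLD, hunion⟩ :=
    card_cosets_union_image_Ico_mul hdvd hn (by omega) (by omega) L hL D hD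
  rw [show ((δ : ℤ) - 2) / 2 = w by omega, hC]
  refine ⟨hDcard.trans hN.symm, fun m hm => by rw [hLD m hm]; omega, ?_⟩
  rw [hunion, hk, hn, hp, hw, show r + (2 * w + 2) - 1 = r + (2 * w + 1) by omega]
  ring_nf
  omega
end
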